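/- arXiv:2308.10463 — 2 statements merged into one kernel-verified Lean document; each statement's English description precedes it below -/
import Mathlib

section
/- Let G be a graph, π = {W_1,…,W_m} a clique vertex-partition of G, and G^π the fully clique-whiskered graph obtained by adding new vertices y_1,…,y_m and edges {x, y_i} for every x ∈ W_i. Then ord-match(G^π) = m; moreover, choosing any w_i ∈ W_i, the matching {{w_i, y_i} : 1 ≤ i ≤ m} is an m-ordered matching of G^π, so m-ord-match(G^π) = ord-match(G^π). -/
/-- The fully clique-whiskered graph `G^π` attached to `G` and a clique
vertex-partition given by `W : V → Fin m` (vertex `u` lies in the clique `W u`):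
add new vertices `y_1,…,y_m` (the `Sum.inr` vertices) and edges `{x, y_c}` for every
`x` with `W x = c`. -/
def cliqueWhisker {V : Type*} (G : SimpleGraph V) {m : ℕ} (W : V → Fin m) :
    SimpleGraph (V ⊕ Fin m) where
  Adj x y := match x, y with
    | .inl u, .inl v => G.Adj u v
    | .inl u, .inr c => W u = c
    | .inr c, .inl u => W u = c
    | .inr _, .inr _ => False
  symm := ⟨by rintro (u|c) (v|d) h <;> simp_all; exact h.symm⟩
  loopless := ⟨by rintro (u|c) h <;> simp_all⟩

/-- `s`-ordered matching (`r ≥ s`, nonempty, pairwise disjoint edges, `a`-side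
independent, `a i ∼ b j ⟹ i = j ∨ i ≤ j − s`). -/
def IsSOrderedMatching {V : Type*} (G : SimpleGraph V) (s r : ℕ)
    (a b : Fin r → V) : Prop :=
  1 ≤ r ∧ s ≤ r ∧
  (∀ i, G.Adj (a i) (b i)) ∧
  Function.Injective (Sum.elim a b) ∧
  (∀ i j, ¬ G.Adj (a i) (a j)) ∧
  (∀ i j : Fin r, G.Adj (a i) (b j) → i = j ∨ (i : ℕ) + s ≤ (j : ℕ))

/-- Ordered matching (nonempty, `a`-side independent, `a i ∼ b j ⟹ i ≤ j`). -/
def IsOrderedMatching {V : Type*} (G : SimpleGraph V) (r : ℕ)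
    (a b : Fin r → V) : Prop :=
  1 ≤ r ∧
  (∀ i, G.Adj (a i) (b i)) ∧
  Function.Injective (Sum.elim a b) ∧
  (∀ i j, ¬ G.Adj (a i) (a j)) ∧
  (∀ i j : Fin r, G.Adj (a i) (b j) → i ≤ j)

/-- The ordered matching number (as a natural number; `0` if there is none). -/
noncomputable def ordMatchNum {V : Type*} (G : SimpleGraph V) : ℕ :=
  sSup {r | ∃ a b : Fin r → V, IsOrderedMatching G r a b}

/-- The `s`-ordered matching number (as a natural number; `0` if there is none). -/
noncomputable def sOrdMatchNum {V : Type*} (G : SimpleGraph V) (s : ℕ) : ℕ :=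
  sSup {r | ∃ a b : Fin r → V, IsSOrderedMatching G s r a b}

/-!
The whisker vertices `y_c` are pairwise non-adjacent and `y_c ∼ w_c`, while `y_i ∼ w_j`
forces `i = j`; so `{{y_c, w_c}}` is an `m`-ordered matching. Conversely, the independent
side of any ordered matching of `G^π` meets each of the `m` cliques `W_c ∪ {y_c}` at most
once, so it has at most `m` vertices.
-/

theorem IsSOrderedMatching.isOrderedMatching {V : Type*} {G : SimpleGraph V} {s r : ℕ}
    {a b : Fin r → V} (h : IsSOrderedMatching G s r a b) : IsOrderedMatching G r a b := by
  obtain ⟨hr, -, hadj, hinj, hind, hord⟩ := h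
  refine ⟨hr, hadj, hinj, hind, fun i j hij => ?_⟩
  rcases hord i j hij with h | h
  · exact h.le
  · exact Fin.le_iff_val_le_val.mpr (by omega)

theorem card_le_of_independent_of_cliqueCover {α ι : Type*} [Fintype ι] {H : SimpleGraph α}
    (f : α → ι) (hf : ∀ x y, x ≠ y → f x = f y → H.Adj x y) {r : ℕ} {a : Fin r → α}
    (ha : Function.Injective a) (hind : ∀ i j, ¬ H.Adj (a i) (a j)) :
    r ≤ Fintype.card ι := by
  have hfa : Function.Injective (f ∘ a) := fun i j hij =>
    ha (by_contra fun hne => hind i j (hf _ _ hne hij))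
  simpa using Fintype.card_le_of_injective _ hfa

theorem IsOrderedMatching.card_le_of_cliqueCover {α ι : Type*} [Fintype ι]
    {H : SimpleGraph α} (f : α → ι) (hf : ∀ x y, x ≠ y → f x = f y → H.Adj x y) {r : ℕ}
    {a b : Fin r → α} (h : IsOrderedMatching H r a b) : r ≤ Fintype.card ι :=
  card_le_of_independent_of_cliqueCover f hf (h.2.2.1.comp Sum.inl_injective) h.2.2.2.1

section cliqueWhisker

variable {V : Type*} {G : SimpleGraph V} {m : ℕ} {W : V → Fin m}

theorem cliqueWhisker_adj_of_ne_of_elim_eq (hclique : ∀ u v, u ≠ v → W u = W v → G.Adj u v)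
    (x y : V ⊕ Fin m) (hne : x ≠ y) (hxy : Sum.elim W id x = Sum.elim W id y) :
    (cliqueWhisker G W).Adj x y := by
  rcases x with u | c <;> rcases y with v | d
  · exact hclique u v (fun h => hne (congrArg Sum.inl h)) hxy
  · exact hxy
  · exact hxy.symm
  · exact absurd (congrArg Sum.inr hxy) hne

theorem isSOrderedMatching_cliqueWhisker (hm : 0 < m) {w : Fin m → V}
    (hw : ∀ c, W (w c) = c) :
    IsSOrderedMatching (cliqueWhisker G W) m m (fun c => Sum.inr c)
      (fun c => Sum.inl (w c)) := by
  refine ⟨hm, le_rfl, hw, ?_, fun _ _ => not_false, fun i j hij => .inl ?_⟩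
  · rintro (i | i) (j | j) hij
    · simpa using hij
    · simp at hij
    · simp at hij
    · simpa [hw] using congrArg W (Sum.inl.inj hij)
  · exact ((hw j).symm.trans hij).symm

end cliqueWhisker

theorem cliqueWhisker_ordMatch_general {V : Type*} (G : SimpleGraph V) (m : ℕ) (hm : 0 < m)
    (W : V → Fin m) (hclique : ∀ u v, u ≠ v → W u = W v → G.Adj u v)
    (w : Fin m → V) (hw : ∀ c, W (w c) = c) :
    ordMatchNum (cliqueWhisker G W) = m ∧
    IsSOrderedMatching (cliqueWhisker G W) m m
      (fun c => Sum.inr c) (fun c => Sum.inl (w c)) ∧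
    sOrdMatchNum (cliqueWhisker G W) m = ordMatchNum (cliqueWhisker G W) := by
  have hmatch := isSOrderedMatching_cliqueWhisker (G := G) hm hw
  have hbound : ∀ r (a b : Fin r → V ⊕ Fin m),
      IsOrderedMatching (cliqueWhisker G W) r a b → r ≤ m := fun r a b h => by
    simpa using h.card_le_of_cliqueCover _ (cliqueWhisker_adj_of_ne_of_elim_eq hclique)
  have hord : ordMatchNum (cliqueWhisker G W) = m :=
    IsGreatest.csSup_eq ⟨⟨_, _, hmatch.isOrderedMatching⟩, fun r ⟨a, b, h⟩ => hbound r a b h⟩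
  have hsord : sOrdMatchNum (cliqueWhisker G W) m = m :=
    IsGreatest.csSup_eq ⟨⟨_, _, hmatch⟩, fun r ⟨a, b, h⟩ => hbound r a b h.isOrderedMatching⟩
  exact ⟨hord, hmatch, hsord.trans hord.symm⟩

/-- for a clique vertex-partition `π = {W_1,…,W_m}` of `G` (encoded by
`W : V → Fin m`, surjective, with each fiber a clique), `ord-match(G^π) = m`; moreover
for any choice `w c ∈ W_c`, the matching `{{w_c, y_c} | 1 ≤ c ≤ m}` (with the whisker
vertices `y_c` as the independent side) is an `m`-ordered matching of `G^π`, so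
`m-ord-match(G^π) = ord-match(G^π)`. -/
theorem cliqueWhisker_ordMatch {V : Type*} (G : SimpleGraph V) (m : ℕ) (hm : 0 < m)
    (W : V → Fin m) (hclique : ∀ u v, u ≠ v → W u = W v → G.Adj u v)
    (hsurj : Function.Surjective W)
    (w : Fin m → V) (hw : ∀ c, W (w c) = c) :
    ordMatchNum (cliqueWhisker G W) = m ∧
    IsSOrderedMatching (cliqueWhisker G W) m m
      (fun c => Sum.inr c) (fun c => Sum.inl (w c)) ∧
    sOrdMatchNum (cliqueWhisker G W) m = ordMatchNum (cliqueWhisker G W) :=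
  cliqueWhisker_ordMatch_general G m hm W hclique w hw
end

section
/- For any graph G and integer k ≥ 1, the polarization of the k-th symbolic power of the cover ideal J(G) equals the cover ideal of the graph G_k: (J(G)^{(k)})^{pol} = J(G_k). -/
/-!
Both ideals are monomial ideals, so the equality is a statement about exponent vectors.
A monomial `x^a` lies in `(x_u, x_v)^k` iff `a_u + a_v ≥ k`. If this holds for an edge `uv` and
`p + q ≤ k + 1`, then `p ≤ a_u` or `q ≤ a_v`, so the polarization of `x^a` is divisible by
`x_{u,p}` or `x_{v,q}`. Conversely, a monomial of `J(G_k)` is divisible by the polarization of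
`x^a`, where `a_i` is the length of the initial run `x_{i,1}, x_{i,2}, …` of variables dividing it;
if `a_u + a_v < k` for an edge `uv`, the edge `{x_{u, a_u + 1}, x_{v, a_v + 1}}` of `G_k` would be
left uncovered.
-/

open MvPolynomial

/-- The "polarization graph" `G_k`: vertices `x_{i,p}` (`p ∈ Fin k` stands for
`p+1 ∈ {1,…,k}`), `x_{i,p} ∼ x_{j,q}` iff `x_i ∼ x_j` in `G` and `p + q ≤ k + 1`. -/
def polGraph {V : Type*} (G : SimpleGraph V) (k : ℕ) : SimpleGraph (V × Fin k) where
  Adj a b := G.Adj a.1 b.1 ∧ ((a.2 : ℕ) + 1) + ((b.2 : ℕ) + 1) ≤ k + 1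
  symm := ⟨by rintro a b ⟨h, hle⟩; exact ⟨h.symm, by omega⟩⟩
  loopless := ⟨by rintro a ⟨h, -⟩; exact absurd rfl (G.ne_of_adj h)⟩

variable {K : Type*} [Field K]

/-- The cover ideal `J(H) = ⋂_{{u,v} ∈ E(H)} (x_u, x_v)`. -/
noncomputable def coverIdeal {W : Type*} (H : SimpleGraph W) : Ideal (MvPolynomial W K) :=
  ⨅ (u : W), ⨅ (v : W), ⨅ (_ : H.Adj u v), Ideal.span {X u, X v}

/-- The `k`-th symbolic power of the cover ideal:
`J(G)^{(k)} = ⋂_{{u,v} ∈ E(G)} (x_u, x_v)^k`. -/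
noncomputable def coverIdealSymbPow {W : Type*} (H : SimpleGraph W) (k : ℕ) :
    Ideal (MvPolynomial W K) :=
  ⨅ (u : W), ⨅ (v : W), ⨅ (_ : H.Adj u v), (Ideal.span {X u, X v}) ^ k

/-- The polarization of the monomial `x^a` (all exponents `≤ k`) in the polynomial ring
`K[x_{i,p} : i ∈ V, p ∈ Fin k]`: replace `x_i^{a_i}` by `x_{i,1} x_{i,2} ⋯ x_{i,a_i}`. -/
noncomputable def polMonomial {V : Type*} [Fintype V] (K : Type*) [Field K] (k : ℕ)
    (a : V →₀ ℕ) : MvPolynomial (V × Fin k) K :=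
  ∏ i : V, ∏ p : Fin k, if (p : ℕ) < a i then X (i, p) else 1

/-- The polarization of a monomial ideal `I` (whose relevant generators have all
exponents `≤ k`): the ideal generated by the polarizations of the monomials of `I`
with exponents `≤ k` (this ideal is generated by the polarizations of the minimal
monomial generators of `I`). -/
noncomputable def polIdeal {V : Type*} [Fintype V] (K : Type*) [Field K] (k : ℕ)
    (I : Ideal (MvPolynomial V K)) : Ideal (MvPolynomial (V × Fin k) K) :=
  Ideal.span {f | ∃ a : V →₀ ℕ, (monomial a (1 : K)) ∈ I ∧ (∀ i, a i ≤ k) ∧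
    f = polMonomial K k a}

section SpanXPair

variable {σ : Type*} {u v : σ}

lemma le_add_of_mem_span_X_pair_pow {k : ℕ} {f : MvPolynomial σ K}
    (hf : f ∈ Ideal.span {X u, X v} ^ k) : ∀ c ∈ f.support, k ≤ c u + c v := by
  classical
  induction k generalizing f with
  | zero => simp
  | succ k ih =>
    rw [pow_succ] at hf
    refine Submodule.mul_induction_on hf (fun g hg h hh c hc => ?_) fun g h hg hh c hc => ?_
    · obtain ⟨d, hd, e, he, rfl⟩ := Finset.mem_add.mp (support_mul g h hc)
      rw [← Set.image_pair, mem_ideal_span_X_image] at hh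
      obtain ⟨i, hi, hei⟩ := hh e he
      have := ih hg d hd
      rcases hi with rfl | rfl <;> simp only [Finsupp.add_apply] <;> omega
    · rcases Finset.mem_union.mp (support_add hc) with hc | hc
      exacts [hg c hc, hh c hc]

lemma X_pow_mul_X_pow_mem_span_X_pair_pow (i j : ℕ) :
    (X u ^ i * X v ^ j : MvPolynomial σ K) ∈ Ideal.span {X u, X v} ^ (i + j) := by
  rw [pow_add]
  exact Ideal.mul_mem_mul (Ideal.pow_mem_pow (Ideal.subset_span (by simp)) _)
    (Ideal.pow_mem_pow (Ideal.subset_span (by simp)) _)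

lemma monomial_mem_span_X_pair_pow_iff (huv : u ≠ v) (k : ℕ) (a : σ →₀ ℕ) :
    (monomial a (1 : K)) ∈ Ideal.span {X u, X v} ^ k ↔ k ≤ a u + a v := by
  classical
  refine ⟨fun h => le_add_of_mem_span_X_pair_pow h a
    (by rw [mem_support_iff, coeff_monomial, if_pos rfl]; exact one_ne_zero), fun h => ?_⟩
  have hdvd : (X u ^ a u * X v ^ a v : MvPolynomial σ K) ∣ monomial a 1 := by
    rw [X_pow_eq_monomial, X_pow_eq_monomial, monomial_mul, monomial_dvd_monomial]
    refine ⟨Or.inr fun w => ?_, by simp⟩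
    by_cases hu : w = u <;> by_cases hv : w = v <;> simp_all [eq_comm]
  exact Ideal.mem_of_dvd _ hdvd
    (Ideal.pow_le_pow_right h (X_pow_mul_X_pow_mem_span_X_pair_pow _ _))

end SpanXPair

lemma mem_coverIdeal_iff {W : Type*} (H : SimpleGraph W) (f : MvPolynomial W K) :
    f ∈ coverIdeal H ↔ ∀ c ∈ f.support, ∀ u v, H.Adj u v → c u ≠ 0 ∨ c v ≠ 0 := by
  simp only [coverIdeal, Submodule.mem_iInf, ← Set.image_pair, mem_ideal_span_X_image,
    Set.mem_insert_iff, Set.mem_singleton_iff, exists_eq_or_imp, exists_eq_left]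
  exact ⟨fun h c hc u v huv => h u v huv c hc, fun h u v huv c hc => h c hc u v huv⟩

lemma monomial_mem_coverIdealSymbPow_iff {W : Type*} (H : SimpleGraph W) (k : ℕ) (a : W →₀ ℕ) :
    monomial a (1 : K) ∈ coverIdealSymbPow H k ↔ ∀ u v, H.Adj u v → k ≤ a u + a v := by
  simp only [coverIdealSymbPow, Submodule.mem_iInf]
  exact forall₂_congr fun u v => forall_congr' fun huv =>
    monomial_mem_span_X_pair_pow_iff huv.ne k a

section Polarization

variable {V : Type*} [Fintype V] {k : ℕ}

noncomputable def polExponent (k : ℕ) (a : V →₀ ℕ) : V × Fin k →₀ ℕ :=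
  Finsupp.equivFunOnFinite.symm fun x => if (x.2 : ℕ) < a x.1 then 1 else 0

lemma polExponent_apply (a : V →₀ ℕ) (x : V × Fin k) :
    polExponent k a x = if (x.2 : ℕ) < a x.1 then 1 else 0 :=
  rfl

lemma polExponent_ne_zero_iff {a : V →₀ ℕ} {x : V × Fin k} :
    polExponent k a x ≠ 0 ↔ (x.2 : ℕ) < a x.1 := by
  simp [polExponent_apply]

lemma polMonomial_eq_monomial (a : V →₀ ℕ) :
    polMonomial K k a = monomial (polExponent k a) 1 := by
  rw [monomial_eq, C_1, one_mul, Finsupp.prod_fintype _ _ fun _ => pow_zero _,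
    Fintype.prod_prod_type, polMonomial]
  refine Finset.prod_congr rfl fun i _ => Finset.prod_congr rfl fun p _ => ?_
  rw [polExponent_apply]
  split_ifs <;> simp

lemma mem_polIdeal_iff (I : Ideal (MvPolynomial V K)) (f : MvPolynomial (V × Fin k) K) :
    f ∈ polIdeal K k I ↔ ∀ c ∈ f.support,
      ∃ a : V →₀ ℕ, monomial a (1 : K) ∈ I ∧ (∀ i, a i ≤ k) ∧ polExponent k a ≤ c := by
  have hgen : {f | ∃ a : V →₀ ℕ, monomial a (1 : K) ∈ I ∧ (∀ i, a i ≤ k) ∧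
      f = polMonomial K k a} = (fun s => monomial s (1 : K)) ''
        {e | ∃ a : V →₀ ℕ, monomial a (1 : K) ∈ I ∧ (∀ i, a i ≤ k) ∧ polExponent k a = e} := by
    ext f
    simp [polMonomial_eq_monomial, eq_comm, and_assoc]
  rw [polIdeal, hgen, mem_ideal_span_monomial_image]
  simp [and_assoc]

lemma ne_zero_or_ne_zero_of_polExponent_le (G : SimpleGraph V) {a : V →₀ ℕ}
    (ha : ∀ u v, G.Adj u v → k ≤ a u + a v) {c : V × Fin k →₀ ℕ} (hac : polExponent k a ≤ c)
    {x y : V × Fin k} (hxy : (polGraph G k).Adj x y) : c x ≠ 0 ∨ c y ≠ 0 := by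
  have hpos {z : V × Fin k} (hz : (z.2 : ℕ) < a z.1) : c z ≠ 0 :=
    ((Nat.pos_of_ne_zero (polExponent_ne_zero_iff.2 hz)).trans_le (hac z)).ne'
  have := ha _ _ hxy.1
  have := hxy.2
  rcases (show (x.2 : ℕ) < a x.1 ∨ (y.2 : ℕ) < a y.1 by omega) with h | h
  exacts [.inl (hpos h), .inr (hpos h)]

open Classical in
/-- `depolExponent c i` is the length of the initial run of nonzero entries
`c (i, 0), c (i, 1), …`, i.e. the largest `a i` with `polExponent k a ≤ c`. -/
noncomputable def depolExponent (c : V × Fin k →₀ ℕ) : V →₀ ℕ :=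
  Finsupp.equivFunOnFinite.symm fun i =>
    Nat.find (⟨k, fun h => absurd h (lt_irrefl k)⟩ : ∃ t, ∀ h : t < k, c (i, ⟨t, h⟩) = 0)

lemma depolExponent_le (c : V × Fin k →₀ ℕ) (i : V) : depolExponent c i ≤ k :=
  Nat.find_min' _ fun h => absurd h (lt_irrefl k)

lemma polExponent_depolExponent_le (c : V × Fin k →₀ ℕ) :
    polExponent k (depolExponent c) ≤ c := by
  intro x
  rw [polExponent_apply]
  split_ifs with hx
  · have := Nat.find_min _ hx
    push Not at this
    exact Nat.one_le_iff_ne_zero.2 this.2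
  · exact Nat.zero_le _

lemma depolExponent_eq_zero (c : V × Fin k →₀ ℕ) {i : V} (hi : depolExponent c i < k) :
    c (i, ⟨depolExponent c i, hi⟩) = 0 :=
  Nat.find_spec (p := fun t => ∀ h : t < k, c (i, ⟨t, h⟩) = 0) _ hi

lemma le_add_depolExponent (G : SimpleGraph V) {c : V × Fin k →₀ ℕ}
    (hc : ∀ x y, (polGraph G k).Adj x y → c x ≠ 0 ∨ c y ≠ 0) {u v : V} (huv : G.Adj u v) :
    k ≤ depolExponent c u + depolExponent c v := by
  by_contra! hlt
  have hu : depolExponent c u < k := by omega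
  have hv : depolExponent c v < k := by omega
  have := hc (u, ⟨_, hu⟩) (v, ⟨_, hv⟩) ⟨huv, by simp only; omega⟩
  simp [depolExponent_eq_zero] at this

end Polarization

theorem polarization_symbolicPower_coverIdeal_general {V : Type*} [Fintype V]
    (G : SimpleGraph V) (k : ℕ) :
    polIdeal K k (coverIdealSymbPow (K := K) G k) = coverIdeal (polGraph G k) := by
  ext f
  simp only [mem_polIdeal_iff, monomial_mem_coverIdealSymbPow_iff, mem_coverIdeal_iff]
  refine forall₂_congr fun c _ => ⟨?_, fun hc => ?_⟩
  · rintro ⟨a, ha, -, hac⟩ x y hxy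
    exact ne_zero_or_ne_zero_of_polExponent_le G ha hac hxy
  · exact ⟨depolExponent c, fun u v => le_add_depolExponent G hc, depolExponent_le c,
      polExponent_depolExponent_le c⟩

/-- for any graph `G` and `k ≥ 1`, the polarization of the `k`-th symbolic
power of the cover ideal `J(G)` is the cover ideal of the graph `G_k`:
`(J(G)^{(k)})^{pol} = J(G_k)`. -/
theorem polarization_symbolicPower_coverIdeal {V : Type*} [Fintype V] [DecidableEq V]
    (G : SimpleGraph V) (k : ℕ) (hk : 1 ≤ k) :
    polIdeal K k (coverIdealSymbPow (K := K) G k) = coverIdeal (polGraph G k) :=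
  polarization_symbolicPower_coverIdeal_general G k
end
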